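/- arXiv:1911.08468 — 2 statements merged into one kernel-verified Lean document; each statement's English description precedes it below -/
import Mathlib

section
/- Let (X, d) be a metric space, let E be a real inner product space, and let e : X → E satisfy ‖e(x) − e(x')‖ = d(x, x') for all x, x' ∈ X. Fix points X₁, …, Xₙ ∈ X and define the empirically centered kernel K(x, x') = (1/(2n²)) ∑ᵢ₌₁ⁿ ∑ⱼ₌₁ⁿ ( d(x, Xᵢ)² + d(x', Xⱼ)² − d(x, x')² − d(Xᵢ, Xⱼ)² ). Then with ē = (1/n) ∑ᵢ e(Xᵢ), for all x, x' ∈ X one has K(x, x') = ⟨e(x) − ē, e(x') − ē⟩. -/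
/-!
In an inner product space the four-point combination
‖a - c‖² + ‖b - d‖² - ‖a - b‖² - ‖c - d‖² equals 2⟪a - d, b - c⟫. Summing over the sample
points and using bilinearity, the double sum becomes 2⟪∑ⱼ (u - vⱼ), ∑ᵢ (w - vᵢ)⟫
= 2n²⟪u - v̄, w - v̄⟫. An isometric embedding transports the distances to these norms.
-/

open Finset

section InnerProductSpace

variable {E : Type*} [NormedAddCommGroup E] [InnerProductSpace ℝ E]

theorem norm_sub_sq_add_norm_sub_sq_sub_sub_eq_two_mul_inner (a b c d : E) :
    ‖a - c‖ ^ 2 + ‖b - d‖ ^ 2 - ‖a - b‖ ^ 2 - ‖c - d‖ ^ 2 =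
      2 * (inner ℝ (a - d) (b - c) : ℝ) := by
  simp only [norm_sub_sq_real, inner_sub_left, inner_sub_right, real_inner_comm b d,
    real_inner_comm c d]
  ring

theorem sum_sub_eq_card_smul_sub_mean {ι : Type*} [Fintype ι] [Nonempty ι]
    (v : ι → E) (u : E) :
    ∑ i, (u - v i) = (Fintype.card ι : ℝ) • (u - (Fintype.card ι : ℝ)⁻¹ • ∑ i, v i) := by
  have hcard : (Fintype.card ι : ℝ) ≠ 0 := by positivity
  rw [sum_sub_distrib, smul_sub, smul_inv_smul₀ hcard, sum_const, card_univ, Nat.cast_smul_eq_nsmul]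

theorem centered_double_sum_eq_inner {ι : Type*} [Fintype ι] [Nonempty ι]
    (v : ι → E) (u w : E) :
    (1 / (2 * (Fintype.card ι : ℝ) ^ 2)) *
        ∑ i, ∑ j, (‖u - v i‖ ^ 2 + ‖w - v j‖ ^ 2 - ‖u - w‖ ^ 2 - ‖v i - v j‖ ^ 2) =
      inner ℝ (u - (Fintype.card ι : ℝ)⁻¹ • ∑ i, v i) (w - (Fintype.card ι : ℝ)⁻¹ • ∑ i, v i) := by
  have hcard : (Fintype.card ι : ℝ) ≠ 0 := by positivity
  have hsum : ∑ i, ∑ j, (‖u - v i‖ ^ 2 + ‖w - v j‖ ^ 2 - ‖u - w‖ ^ 2 - ‖v i - v j‖ ^ 2) =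
      2 * inner ℝ (∑ j, (u - v j)) (∑ i, (w - v i)) := by
    simp only [norm_sub_sq_add_norm_sub_sq_sub_sub_eq_two_mul_inner, ← mul_sum, sum_inner,
      inner_sum]
  rw [hsum, sum_sub_eq_card_smul_sub_mean, sum_sub_eq_card_smul_sub_mean, real_inner_smul_left,
    real_inner_smul_right]
  field_simp

end InnerProductSpace

theorem empirically_centered_kernel_eq_inner
    {X : Type*} [MetricSpace X]
    {E : Type*} [NormedAddCommGroup E] [InnerProductSpace ℝ E]
    (e : X → E) (he : ∀ x x' : X, ‖e x - e x'‖ = dist x x')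
    (n : ℕ) (hn : 1 ≤ n) (P : Fin n → X)
    (ebar : E) (hebar : ebar = (n : ℝ)⁻¹ • ∑ i, e (P i)) :
    ∀ x x' : X,
      (1 / (2 * (n : ℝ) ^ 2)) *
          ∑ i, ∑ j,
            (dist x (P i) ^ 2 + dist x' (P j) ^ 2 - dist x x' ^ 2
              - dist (P i) (P j) ^ 2) =
        (inner ℝ (e x - ebar) (e x' - ebar) : ℝ) := by
  intro x x'
  have : Nonempty (Fin n) := ⟨⟨0, hn⟩⟩
  simpa only [← he, Fintype.card_fin, ← hebar] using
    centered_double_sum_eq_inner (fun i => e (P i)) (e x) (e x')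
end

section
/- Let (X, d) be a metric space admitting an isometric embedding e : X → E into a real inner product space (i.e., ‖e(x) − e(x')‖ = d(x, x') for all x, x'). Fix X₁, …, Xₙ ∈ X and let K be the empirically centered kernel. Then K is positive semidefinite: for every m, every c₁, …, c_m ∈ ℝ, and every y₁, …, y_m ∈ X, ∑ᵢ₌₁ᵐ ∑ⱼ₌₁ᵐ cᵢ cⱼ K(yᵢ, yⱼ) ≥ 0. -/
/-!
Polarization turns each summand d(x, Xᵢ)² + d(x', Xⱼ)² − d(x, x')² − d(Xᵢ, Xⱼ)² into
2⟪e x − e Xⱼ, e x' − e Xᵢ⟫, so the double sum factors and K(x, x') = ⟪φ x, φ x'⟫ with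
φ x = e x − (1/n) ∑ⱼ e Xⱼ. A Gram kernel is positive semidefinite:
∑ᵢⱼ cᵢ cⱼ ⟪φ yᵢ, φ yⱼ⟫ = ‖∑ᵢ cᵢ φ yᵢ‖².
-/

open Finset

section

variable {E : Type*} [NormedAddCommGroup E] [InnerProductSpace ℝ E]

theorem two_mul_inner_sub_sub_eq (a b c d : E) :
    2 * inner ℝ (a - d) (b - c) = ‖a - c‖ ^ 2 + ‖b - d‖ ^ 2 - ‖a - b‖ ^ 2 - ‖c - d‖ ^ 2 := by
  simp only [norm_sub_sq_real, inner_sub_left, inner_sub_right, real_inner_comm b d,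
    real_inner_comm c d]
  ring

theorem sum_sum_mul_inner_nonneg {ι : Type*} (s : Finset ι) (c : ι → ℝ) (v : ι → E) :
    0 ≤ ∑ i ∈ s, ∑ j ∈ s, c i * c j * inner ℝ (v i) (v j) := by
  convert real_inner_self_nonneg (x := ∑ i ∈ s, c i • v i) using 1
  simp only [sum_inner, inner_sum, real_inner_smul_left, real_inner_smul_right]
  exact sum_congr rfl fun i _ => sum_congr rfl fun j _ => by rw [real_inner_comm]; ring

theorem sum_sum_polarization {ι : Type*} (s : Finset ι) (u : ι → E) (a b : E) :
    ∑ i ∈ s, ∑ j ∈ s, (‖a - u i‖ ^ 2 + ‖b - u j‖ ^ 2 - ‖a - b‖ ^ 2 - ‖u i - u j‖ ^ 2) =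
      2 * inner ℝ (∑ j ∈ s, (a - u j)) (∑ i ∈ s, (b - u i)) := by
  simp only [sum_inner, inner_sum, mul_sum, two_mul_inner_sub_sub_eq]

theorem centered_kernel_eq_inner {ι : Type*} (s : Finset ι) (u : ι → E) (a b : E) :
    1 / (2 * (#s : ℝ) ^ 2) *
        ∑ i ∈ s, ∑ j ∈ s, (‖a - u i‖ ^ 2 + ‖b - u j‖ ^ 2 - ‖a - b‖ ^ 2 - ‖u i - u j‖ ^ 2) =
      inner ℝ ((#s : ℝ)⁻¹ • ∑ j ∈ s, (a - u j)) ((#s : ℝ)⁻¹ • ∑ i ∈ s, (b - u i)) := by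
  rw [sum_sum_polarization, real_inner_smul_left, real_inner_smul_right]
  field_simp

end

theorem empirically_centered_kernel_posSemidef_general
    {X : Type*} [MetricSpace X]
    {E : Type*} [NormedAddCommGroup E] [InnerProductSpace ℝ E]
    (e : X → E) (he : ∀ x x' : X, ‖e x - e x'‖ = dist x x')
    (n : ℕ) (P : Fin n → X)
    (K : X → X → ℝ)
    (hK : ∀ x x' : X,
      K x x' =
        (1 / (2 * (n : ℝ) ^ 2)) *
          ∑ i, ∑ j,
            (dist x (P i) ^ 2 + dist x' (P j) ^ 2 - dist x x' ^ 2
              - dist (P i) (P j) ^ 2)) :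
    ∀ (m : ℕ) (c : Fin m → ℝ) (y : Fin m → X),
      0 ≤ ∑ i, ∑ j, c i * c j * K (y i) (y j) := by
  have hK_inner : ∀ x x', K x x' =
      inner ℝ ((n : ℝ)⁻¹ • ∑ j, (e x - e (P j))) ((n : ℝ)⁻¹ • ∑ i, (e x' - e (P i))) := by
    intro x x'
    simpa [hK, ← he] using centered_kernel_eq_inner univ (e ∘ P) (e x) (e x')
  intro m c y
  simp only [hK_inner]
  exact sum_sum_mul_inner_nonneg univ c fun i => (n : ℝ)⁻¹ • ∑ j, (e (y i) - e (P j))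

theorem empirically_centered_kernel_posSemidef
    {X : Type*} [MetricSpace X]
    {E : Type*} [NormedAddCommGroup E] [InnerProductSpace ℝ E]
    (e : X → E) (he : ∀ x x' : X, ‖e x - e x'‖ = dist x x')
    (n : ℕ) (hn : 1 ≤ n) (P : Fin n → X)
    (K : X → X → ℝ)
    (hK : ∀ x x' : X,
      K x x' =
        (1 / (2 * (n : ℝ) ^ 2)) *
          ∑ i, ∑ j,
            (dist x (P i) ^ 2 + dist x' (P j) ^ 2 - dist x x' ^ 2
              - dist (P i) (P j) ^ 2)) :
    ∀ (m : ℕ) (c : Fin m → ℝ) (y : Fin m → X),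
      0 ≤ ∑ i, ∑ j, c i * c j * K (y i) (y j) :=
  empirically_centered_kernel_posSemidef_general e he n P K hK
end
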